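/- arXiv:0708.2566 — 3 statements merged into one kernel-verified Lean document; each statement's English description precedes it below -/
import Mathlib

section
/- Fix x ∈ X and let Z be a random variable on the finite alphabet Z with distribution P(Z = z) = Π(x,z). Suppose H satisfies ΠH = I, i.e., Σ_z Π(a,z)·H(z,b) = δ(a,b) for all a,b ∈ X. Define for a single-symbol denoiser s : Z → X̂ the estimated loss ℓ(z,s) = Σ_{x'∈X} H(z,x')·ρ_{x'}(s), where ρ_{x'}(s) = Σ_z Λ(x', s(z))·Π(x',z). Then E[ℓ(Z,s)] = E[Λ(x, s(Z))], i.e., ℓ(Z,s) is an unbiased estimate of the true expected loss. -/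
open Matrix

/-- Unbiasedness is `Π (H ρ) = (Π H) ρ = ρ`, read at the row `x`. -/
theorem sum_mul_sum_mul_eq_of_mul_eq_one {R X Z : Type*} [Semiring R] [Fintype X] [Fintype Z]
    [DecidableEq X] (P : X → Z → R) (H : Z → X → R)
    (hPH : ∀ a b, ∑ z, P a z * H z b = if a = b then (1 : R) else 0) (ρ : X → R) (x : X) :
    ∑ z, P x z * ∑ x', H z x' * ρ x' = ρ x := by
  have hmul : Matrix.of P * Matrix.of H = 1 := by
    ext a b
    simp only [mul_apply, of_apply, hPH, one_apply]
  have hρ := congrFun (mulVec_mulVec ρ (Matrix.of P) (Matrix.of H)) x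
  rw [hmul, one_mulVec] at hρ
  simpa only [mulVec, dotProduct, of_apply] using hρ

theorem estimated_loss_unbiased_general {X Z Xh : Type*} [Fintype X] [Fintype Z]
    [DecidableEq X]
    (Λ : X → Xh → ℝ)
    (P : X → Z → ℝ)
    (H : Z → X → ℝ)
    (hPH : ∀ a b, ∑ z, P a z * H z b = if a = b then (1 : ℝ) else 0)
    (x : X) (s : Z → Xh) :
    ∑ z, P x z * (∑ x', H z x' * (∑ z', Λ x' (s z') * P x' z')) =
      ∑ z, P x z * Λ x (s z) := by
  rw [sum_mul_sum_mul_eq_of_mul_eq_one P H hPH (fun x' => ∑ z', Λ x' (s z') * P x' z') x]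
  simp_rw [mul_comm]

/-- The estimated loss `ℓ(z,s) = ∑_{x'} H(z,x') ρ_{x'}(s)` (with
`ρ_{x'}(s) = ∑_z Λ(x',s(z)) Π(x',z)`) is an unbiased estimate of the true expected
loss: `E[ℓ(Z,s)] = E[Λ(x, s(Z))]` when `Z ~ Π(x,·)` and `ΠH = I`. -/
theorem estimated_loss_unbiased {X Z Xh : Type*} [Fintype X] [Fintype Z] [Fintype Xh]
    [DecidableEq X]
    (Λ : X → Xh → ℝ) (hΛ : ∀ a b, 0 ≤ Λ a b)
    (P : X → Z → ℝ) (hPnn : ∀ a z, 0 ≤ P a z) (hPsum : ∀ a, ∑ z, P a z = 1)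
    (H : Z → X → ℝ)
    (hPH : ∀ a b, ∑ z, P a z * H z b = if a = b then (1 : ℝ) else 0)
    (x : X) (s : Z → Xh) :
    ∑ z, P x z * (∑ x', H z x' * (∑ z', Λ x' (s z') * P x' z')) =
      ∑ z, P x z * Λ x (s z) :=
  estimated_loss_unbiased_general Λ P H hPH x s
end

section
/- Fix ε > 0, an individual sequence x₁,...,xₙ ∈ X, independent noisy observations Zₜ ~ Π(xₜ,·), and a fixed tuple S = (s₁,...,sₙ) of single-symbol denoisers. Let L_S(xⁿ,Zⁿ) = (1/n)Σₜ Λ(xₜ,sₜ(Zₜ)) and L̃_S(Zⁿ) = (1/n)Σₜ ℓ(Zₜ,sₜ). Then P(L_S(xⁿ,Zⁿ) − L̃_S(Zⁿ) > ε) ≤ exp(−2nε²/L_max²) and P(L̃_S(Zⁿ) − L_S(xⁿ,Zⁿ) > ε) ≤ exp(−2nε²/L_max²), where L_max = Λ_max + ℓ_max. -/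
/-!
Because `ΠH = I`, under `Zₜ ~ Π(xₜ,·)` the estimate `ℓ(Zₜ, sₜ)` is unbiased for
`Λ(xₜ, sₜ(Zₜ))`. The differences `Λ(xₜ, sₜ(Zₜ)) − ℓ(Zₜ, sₜ)` are therefore independent, centred,
and confined to an interval of length `Λ_max + ℓ_max`, so Hoeffding's lemma makes each of them
sub-Gaussian and Hoeffding's inequality bounds both tails of their average.
-/

open MeasureTheory ProbabilityTheory

lemma measureReal_sum_ge_le_of_mem_Icc {Ω ι : Type*} [MeasurableSpace Ω] {μ : Measure Ω}
    [IsProbabilityMeasure μ] [Fintype ι] {Y : ι → Ω → ℝ} (hindep : iIndepFun Y μ)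
    (hmeas : ∀ i, AEMeasurable (Y i) μ) {a b : ℝ} (hY : ∀ i ω, Y i ω ∈ Set.Icc a b)
    (hmean : ∀ i, μ[Y i] = 0) {ε : ℝ} (hε : 0 ≤ ε) :
    μ.real {ω | Fintype.card ι * ε ≤ ∑ i, Y i ω} ≤
      Real.exp (-(2 * Fintype.card ι * ε ^ 2) / (b - a) ^ 2) := by
  have hsub : ∀ i ∈ Finset.univ, HasSubgaussianMGF (Y i) ((‖b - a‖₊ / 2) ^ 2) μ := fun i _ =>
    hasSubgaussianMGF_of_mem_Icc_of_integral_eq_zero (hmeas i) (ae_of_all _ (hY i)) (hmean i)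
  refine (HasSubgaussianMGF.measure_sum_ge_le_of_iIndepFun hindep hsub
    (by positivity)).trans_eq ?_
  rcases eq_or_ne (Fintype.card ι) 0 with hN | hN
  · simp [hN]
  · push_cast [Finset.sum_const, Finset.card_univ, nsmul_eq_mul, coe_nnnorm, Real.norm_eq_abs,
      div_pow, sq_abs]
    congr 1
    field_simp

lemma integral_comp_eq_sum_measureReal {Ω Z : Type*} [MeasurableSpace Ω] [MeasurableSpace Z]
    [Fintype Z] [MeasurableSingletonClass Z] {μ : Measure Ω} [IsFiniteMeasure μ] {Y : Ω → Z}
    (hY : Measurable Y) (f : Z → ℝ) :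
    ∫ ω, f (Y ω) ∂μ = ∑ z, μ.real {ω | Y ω = z} * f z := by
  rw [← integral_map hY.aemeasurable (measurable_of_countable f).aestronglyMeasurable,
    integral_fintype .of_finite]
  refine Finset.sum_congr rfl fun z _ => ?_
  rw [measureReal_def, Measure.map_apply hY (measurableSet_singleton z), smul_eq_mul]
  rfl

open Matrix in
lemma sum_mul_sum_mul_eq_of_rightInverse {X Z : Type*} [Fintype X] [Fintype Z] [DecidableEq X]
    {P : X → Z → ℝ} {H : Z → X → ℝ}
    (hPH : ∀ a b, ∑ z, P a z * H z b = if a = b then (1 : ℝ) else 0) (ρ : X → ℝ) (a : X) :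
    ∑ z, P a z * ∑ x', H z x' * ρ x' = ρ a := by
  have hmul : of P * of H = 1 := by
    ext a b
    simp [mul_apply, one_apply, hPH]
  calc ∑ z, P a z * ∑ x', H z x' * ρ x' = (of P *ᵥ (of H *ᵥ ρ)) a := rfl
    _ = ρ a := by rw [mulVec_mulVec, hmul, one_mulVec]

lemma measure_mean_sub_mean_gt_le {Ω Z : Type*} [MeasurableSpace Ω] [MeasurableSpace Z]
    [Countable Z] [MeasurableSingletonClass Z] {μ : Measure Ω} [IsProbabilityMeasure μ]
    {n : ℕ} (hn : 0 < n) {Zs : Fin n → Ω → Z} (hmeas : ∀ t, Measurable (Zs t))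
    (hindep : iIndepFun Zs μ) {u v : Fin n → Z → ℝ} {a₁ b₁ a₂ b₂ : ℝ}
    (hu : ∀ t z, u t z ∈ Set.Icc a₁ b₁) (hv : ∀ t z, v t z ∈ Set.Icc a₂ b₂)
    (huv : ∀ t, ∫ ω, u t (Zs t ω) ∂μ = ∫ ω, v t (Zs t ω) ∂μ) {ε : ℝ} (hε : 0 ≤ ε) :
    μ {ω | (1 / (n : ℝ)) * ∑ t, u t (Zs t ω) - (1 / (n : ℝ)) * ∑ t, v t (Zs t ω) > ε} ≤
      ENNReal.ofReal (Real.exp (-(2 * (n : ℝ) * ε ^ 2) / ((b₁ - a₁) + (b₂ - a₂)) ^ 2)) := by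
  set Y : Fin n → Ω → ℝ := fun t ω => u t (Zs t ω) - v t (Zs t ω)
  have hY_meas : ∀ t, Measurable (Y t) := fun t =>
    ((measurable_of_countable (u t)).comp (hmeas t)).sub
      ((measurable_of_countable (v t)).comp (hmeas t))
  have hY_mem : ∀ t ω, Y t ω ∈ Set.Icc (a₁ - b₂) (b₁ - a₂) := fun t ω =>
    ⟨sub_le_sub (hu t _).1 (hv t _).2, sub_le_sub (hu t _).2 (hv t _).1⟩
  have hcomp_int : ∀ {w : Fin n → Z → ℝ} {a b : ℝ}, (∀ t z, w t z ∈ Set.Icc a b) →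
      ∀ t, Integrable (fun ω => w t (Zs t ω)) μ := fun hw t =>
    .of_mem_Icc _ _ ((measurable_of_countable _).comp (hmeas t)).aemeasurable
      (ae_of_all _ fun ω => hw t (Zs t ω))
  have hY_mean : ∀ t, μ[Y t] = 0 := fun t => by
    rw [integral_sub (hcomp_int hu t) (hcomp_int hv t), huv, sub_self]
  have hY_indep : iIndepFun Y μ :=
    hindep.comp (fun t z => u t z - v t z) fun t => measurable_of_countable _
  have hoeffding := measureReal_sum_ge_le_of_mem_Icc hY_indep (fun t => (hY_meas t).aemeasurable)
    hY_mem hY_mean hε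
  rw [Fintype.card_fin, show b₁ - a₂ - (a₁ - b₂) = (b₁ - a₁) + (b₂ - a₂) by ring] at hoeffding
  rw [← ofReal_measureReal]
  refine ENNReal.ofReal_le_ofReal ((measureReal_mono fun ω hω => ?_).trans hoeffding)
  have hn' : (0 : ℝ) < n := Nat.cast_pos.mpr hn
  simp only [Set.mem_ofPred_eq, Y, Finset.sum_sub_distrib] at hω ⊢
  rw [← mul_sub, gt_iff_lt, one_div_mul_eq_div, lt_div_iff₀ hn'] at hω
  linarith

theorem loss_concentration_general {X Z Xh Ω : Type*} [Fintype X] [Fintype Z] [Fintype Xh]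
    [DecidableEq X]
    [MeasurableSpace Z] [MeasurableSingletonClass Z]
    [MeasurableSpace Ω] (μ : Measure Ω) [IsProbabilityMeasure μ]
    (n : ℕ) (hn : 0 < n)
    (Λ : X → Xh → ℝ) (hΛ : ∀ a b, 0 ≤ Λ a b)
    (P : X → Z → ℝ) (H : Z → X → ℝ)
    (hPH : ∀ a b, ∑ z, P a z * H z b = if a = b then (1 : ℝ) else 0)
    (x : Fin n → X) (s : Fin n → Z → Xh)
    (Zs : Fin n → Ω → Z) (hmeas : ∀ t, Measurable (Zs t))
    (hindep : iIndepFun Zs μ)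
    (hdist : ∀ t z, (μ {ω | Zs t ω = z}).toReal = P (x t) z)
    (ε : ℝ) (hε : 0 < ε) :
    let ℓ : Z → (Z → Xh) → ℝ := fun z s0 => ∑ x', H z x' * ∑ z', Λ x' (s0 z') * P x' z'
    let Λmax : ℝ := ⨆ p : X × Xh, Λ p.1 p.2
    let ℓmax : ℝ := (⨆ p : Z × (Z → Xh), ℓ p.1 p.2) - ⨅ p : Z × (Z → Xh), ℓ p.1 p.2
    let Lmax : ℝ := Λmax + ℓmax
    let Ltrue : Ω → ℝ := fun ω => (1 / (n : ℝ)) * ∑ t, Λ (x t) (s t (Zs t ω))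
    let Lest : Ω → ℝ := fun ω => (1 / (n : ℝ)) * ∑ t, ℓ (Zs t ω) (s t)
    μ {ω | Ltrue ω - Lest ω > ε} ≤
        ENNReal.ofReal (Real.exp (-(2 * (n : ℝ) * ε ^ 2) / Lmax ^ 2)) ∧
      μ {ω | Lest ω - Ltrue ω > ε} ≤
        ENNReal.ofReal (Real.exp (-(2 * (n : ℝ) * ε ^ 2) / Lmax ^ 2)) := by
  intro ℓ Λmax ℓmax Lmax Ltrue Lest
  have hΛ_mem : ∀ a b, Λ a b ∈ Set.Icc 0 Λmax := fun a b =>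
    ⟨hΛ a b, le_ciSup (f := fun p : X × Xh => Λ p.1 p.2) (Set.finite_range _).bddAbove (a, b)⟩
  have hℓ_mem : ∀ z s0, ℓ z s0 ∈
      Set.Icc (⨅ p : Z × (Z → Xh), ℓ p.1 p.2) (⨆ p : Z × (Z → Xh), ℓ p.1 p.2) := fun z s0 =>
    ⟨ciInf_le (f := fun p : Z × (Z → Xh) => ℓ p.1 p.2) (Set.finite_range _).bddBelow (z, s0),
      le_ciSup (f := fun p : Z × (Z → Xh) => ℓ p.1 p.2) (Set.finite_range _).bddAbove (z, s0)⟩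
  have hunbiased : ∀ t, ∫ ω, Λ (x t) (s t (Zs t ω)) ∂μ = ∫ ω, ℓ (Zs t ω) (s t) ∂μ := fun t => by
    rw [integral_comp_eq_sum_measureReal (hmeas t) (fun z => Λ (x t) (s t z)),
      integral_comp_eq_sum_measureReal (hmeas t) (fun z => ℓ z (s t))]
    simp only [measureReal_def, hdist, ℓ]
    rw [sum_mul_sum_mul_eq_of_rightInverse hPH]
    exact Finset.sum_congr rfl fun z _ => mul_comm _ _
  have hLmax : Lmax = (Λmax - 0) + ℓmax := by rw [sub_zero]
  refine ⟨?_, ?_⟩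
  · rw [hLmax]
    exact measure_mean_sub_mean_gt_le (u := fun t z => Λ (x t) (s t z))
      (v := fun t z => ℓ z (s t)) hn hmeas hindep (fun _ _ => hΛ_mem _ _)
      (fun _ _ => hℓ_mem _ _) hunbiased hε.le
  · rw [hLmax, add_comm]
    exact measure_mean_sub_mean_gt_le (u := fun t z => ℓ z (s t))
      (v := fun t z => Λ (x t) (s t z)) hn hmeas hindep (fun _ _ => hℓ_mem _ _)
      (fun _ _ => hΛ_mem _ _) (fun t => (hunbiased t).symm) hε.le

/-- Hoeffding–Azuma concentration of the estimated loss around the true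
loss: for a fixed tuple of single-symbol denoisers and independent `Zₜ ~ Π(xₜ,·)`,
`P(L − L̃ > ε) ≤ exp(−2nε²/L_max²)` and `P(L̃ − L > ε) ≤ exp(−2nε²/L_max²)`,
with `L_max = Λ_max + ℓ_max`. -/
theorem loss_concentration {X Z Xh Ω : Type*} [Fintype X] [Fintype Z] [Fintype Xh]
    [Nonempty X] [Nonempty Z] [Nonempty Xh] [DecidableEq X] [DecidableEq Z]
    [MeasurableSpace Z] [MeasurableSingletonClass Z]
    [MeasurableSpace Ω] (μ : Measure Ω) [IsProbabilityMeasure μ]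
    (n : ℕ) (hn : 0 < n)
    (Λ : X → Xh → ℝ) (hΛ : ∀ a b, 0 ≤ Λ a b)
    (P : X → Z → ℝ) (H : Z → X → ℝ)
    (hPH : ∀ a b, ∑ z, P a z * H z b = if a = b then (1 : ℝ) else 0)
    (x : Fin n → X) (s : Fin n → Z → Xh)
    (Zs : Fin n → Ω → Z) (hmeas : ∀ t, Measurable (Zs t))
    (hindep : iIndepFun Zs μ)
    (hdist : ∀ t z, (μ {ω | Zs t ω = z}).toReal = P (x t) z)
    (ε : ℝ) (hε : 0 < ε) :
    let ℓ : Z → (Z → Xh) → ℝ := fun z s0 => ∑ x', H z x' * ∑ z', Λ x' (s0 z') * P x' z'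
    let Λmax : ℝ := ⨆ p : X × Xh, Λ p.1 p.2
    let ℓmax : ℝ := (⨆ p : Z × (Z → Xh), ℓ p.1 p.2) - ⨅ p : Z × (Z → Xh), ℓ p.1 p.2
    let Lmax : ℝ := Λmax + ℓmax
    let Ltrue : Ω → ℝ := fun ω => (1 / (n : ℝ)) * ∑ t, Λ (x t) (s t (Zs t ω))
    let Lest : Ω → ℝ := fun ω => (1 / (n : ℝ)) * ∑ t, ℓ (Zs t ω) (s t)
    μ {ω | Ltrue ω - Lest ω > ε} ≤
        ENNReal.ofReal (Real.exp (-(2 * (n : ℝ) * ε ^ 2) / Lmax ^ 2)) ∧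
      μ {ω | Lest ω - Ltrue ω > ε} ≤
        ENNReal.ofReal (Real.exp (-(2 * (n : ℝ) * ε ^ 2) / Lmax ^ 2)) :=
  loss_concentration_general μ n hn Λ hΛ P H hPH x s Zs hmeas hindep hdist ε hε
end

section
/- Fix ε > 0 and an individual sequence xⁿ ∈ Xⁿ with independent noisy observations Zₜ ~ Π(xₜ,·). Let Ŝ = argmin over S ∈ S_{0,m}^n of L̃_S(Zⁿ), and let D_{0,m}(xⁿ,Zⁿ) = min over S ∈ S_{0,m}^n of L_S(xⁿ,Zⁿ). Then P(L_{Ŝ}(xⁿ,Zⁿ) − D_{0,m}(xⁿ,Zⁿ) > ε) ≤ 2·exp(−n·[ε²/(2L_max²) − 2{h(m/n) + (m+1)ln N / n}]), where N = |X̂|^{|Z|} and h is binary entropy. -/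
open MeasureTheory ProbabilityTheory

/-- Binary entropy function (natural logarithm), with the convention `h 0 = 0`. -/
noncomputable def binEntropy (x : ℝ) : ℝ := -x * Real.log x - (1 - x) * Real.log (1 - x)

/-!
For a fixed tuple `S`, the differences `Λ(xₜ, sₜ(Zₜ)) - ℓ(Zₜ, sₜ)` are independent, centred
(`ℓ` is an unbiased estimate of the loss because `ΠH = I`) and lie in an interval of length
`L_max`, so by Hoeffding the true and the estimated normalised loss of `S` differ by at least
`ε/2` with probability at most `2 exp(-nε²/(2L_max²))`. If `Ŝ` is worse than the best tuple
`S*` by more than `ε`, then, since `Ŝ` minimises the estimated loss, `Ŝ` or `S*` has such a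
deviation. A union bound over `S_{0,m}^n` finishes the proof: a tuple with at most `m` switches
is determined by its switch set and its values at the switches and at time `0`, so there are at
most `(∑_{k ≤ m} C(n,k)) N^{m+1}` of them, which is `≤ exp(n h(m/n)) N^{m+1}` when `2m ≤ n`;
for larger `m` the trivial count `N^n` suffices. If `X̂` or `Z` is a single point, `Ŝ` is itself
optimal and the event is empty.
-/

open Finset

theorem measure_abs_sum_ge_le_of_mem_Icc {Ω ι : Type*} [MeasurableSpace Ω] {μ : Measure Ω}
    [IsProbabilityMeasure μ] [Fintype ι] {Y : ι → Ω → ℝ} (hind : iIndepFun Y μ)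
    (hm : ∀ i, AEMeasurable (Y i) μ) {a b : ℝ} (hY : ∀ i, ∀ᵐ ω ∂μ, Y i ω ∈ Set.Icc a b)
    (h0 : ∀ i, μ[Y i] = 0) {c : ℝ} (hc : 0 ≤ c) :
    μ {ω | c ≤ |∑ i, Y i ω|} ≤
      ENNReal.ofReal (2 * Real.exp (-2 * c ^ 2 / (Fintype.card ι * (b - a) ^ 2))) := by
  have hsubG (i : ι) := hasSubgaussianMGF_of_mem_Icc_of_integral_eq_zero (hm i) (hY i) (h0 i)
  have hexp : -c ^ 2 / (2 * ((∑ _i : ι, (‖b - a‖₊ / 2) ^ 2 : NNReal) : ℝ)) =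
      -2 * c ^ 2 / (Fintype.card ι * (b - a) ^ 2) := by
    push_cast [sum_const, card_univ, nsmul_eq_mul, div_pow, Real.norm_eq_abs, sq_abs]
    rw [show (2 : ℝ) * (Fintype.card ι * ((b - a) ^ 2 / 2 ^ 2)) =
      Fintype.card ι * (b - a) ^ 2 / 2 by ring, div_div_eq_mul_div]
    ring
  have hup := HasSubgaussianMGF.measure_sum_ge_le_of_iIndepFun hind (s := univ)
    (fun i _ => hsubG i) hc
  have hlow := HasSubgaussianMGF.measure_sum_ge_le_of_iIndepFun
    (hind.comp (fun _ => Neg.neg) fun _ => measurable_neg) (s := univ)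
    (fun i _ => (hsubG i).neg) hc
  rw [hexp] at hup hlow
  calc μ {ω | c ≤ |∑ i, Y i ω|}
      ≤ μ ({ω | c ≤ ∑ i, Y i ω} ∪ {ω | c ≤ ∑ i, (-Y i) ω}) := by
        refine measure_mono fun ω hω => ?_
        rcases le_abs'.mp (Set.mem_ofPred.mp hω) with h | h
        · right
          simp only [Set.mem_ofPred_eq, Pi.neg_apply, sum_neg_distrib]
          linarith
        · exact Or.inl h
    _ ≤ _ := (measure_union_le _ _).trans ?_
  rw [two_mul, ENNReal.ofReal_add (by positivity) (by positivity)]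
  exact add_le_add (ofReal_measureReal (measure_ne_top μ _) ▸ ENNReal.ofReal_le_ofReal hup)
    (ofReal_measureReal (measure_ne_top μ _) ▸ ENNReal.ofReal_le_ofReal hlow)

theorem integral_comp_eq_sum_measure {Ω Z : Type*} [MeasurableSpace Ω] {μ : Measure Ω}
    [IsFiniteMeasure μ] [Fintype Z] [MeasurableSpace Z] [MeasurableSingletonClass Z]
    {Y : Ω → Z} (hY : Measurable Y) (g : Z → ℝ) :
    ∫ ω, g (Y ω) ∂μ = ∑ z, (μ {ω | Y ω = z}).toReal * g z := by
  rw [← integral_map hY.aemeasurable (measurable_of_finite g).aestronglyMeasurable,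
    integral_fintype Integrable.of_finite]
  refine sum_congr rfl fun z _ => ?_
  rw [measureReal_def, Measure.map_apply hY (measurableSet_singleton z), smul_eq_mul]
  rfl

theorem sum_mul_sum_mul_eq_of_sum_mul_eq_ite {X Z R : Type*} [Fintype X] [Fintype Z]
    [DecidableEq X] [CommSemiring R] {P : X → Z → R} {H : Z → X → R}
    (hPH : ∀ a b, ∑ z, P a z * H z b = if a = b then 1 else 0) (f : X → R) (a : X) :
    ∑ z, P a z * ∑ b, H z b * f b = f a := by
  simp_rw [mul_sum, ← mul_assoc]
  rw [sum_comm]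
  simp_rw [← sum_mul, hPH, ite_mul, one_mul, zero_mul, sum_ite_eq, mem_univ, if_true]

theorem integral_loss_sub_estimatedLoss_eq_zero {Ω X Z Xh : Type*} [MeasurableSpace Ω]
    {μ : Measure Ω} [IsFiniteMeasure μ] [Fintype X] [DecidableEq X] [Fintype Z]
    [MeasurableSpace Z] [MeasurableSingletonClass Z] {Λ : X → Xh → ℝ} {P : X → Z → ℝ}
    {H : Z → X → ℝ} (hPH : ∀ a b, ∑ z, P a z * H z b = if a = b then 1 else 0)
    {ℓ : Z → (Z → Xh) → ℝ} (hℓ : ∀ z s, ℓ z s = ∑ b, H z b * ∑ z', Λ b (s z') * P b z')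
    {Y : Ω → Z} (hY : Measurable Y) {a : X} (hlaw : ∀ z, (μ {ω | Y ω = z}).toReal = P a z)
    (s : Z → Xh) :
    ∫ ω, (Λ a (s (Y ω)) - ℓ (Y ω) s) ∂μ = 0 := by
  rw [integral_comp_eq_sum_measure hY (fun z => Λ a (s z) - ℓ z s)]
  simp_rw [hlaw, mul_sub, sum_sub_distrib, hℓ, sum_mul_sum_mul_eq_of_sum_mul_eq_ite hPH, mul_comm,
    sub_self]

theorem card_le_card_of_sum_mul_eq_ite {X Z : Type*} [Fintype X] [Fintype Z] [DecidableEq X]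
    {P : X → Z → ℝ} {H : Z → X → ℝ}
    (hPH : ∀ a b, ∑ z, P a z * H z b = if a = b then (1 : ℝ) else 0) :
    Fintype.card X ≤ Fintype.card Z := by
  have h1 : Matrix.of P * Matrix.of H = 1 := by
    ext a b
    simp [Matrix.mul_apply, hPH, Matrix.one_apply]
  calc Fintype.card X = (1 : Matrix X X ℝ).rank := Matrix.rank_one.symm
    _ ≤ (Matrix.of P).rank := h1 ▸ Matrix.rank_mul_le_left _ _
    _ ≤ Fintype.card Z := Matrix.rank_le_card_width _

theorem estimatedLoss_eq_loss_of_subsingleton {X Z Xh : Type*} [Fintype X] [Fintype Z]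
    [DecidableEq X] [Subsingleton Z] {Λ : X → Xh → ℝ} {P : X → Z → ℝ} {H : Z → X → ℝ}
    (hPH : ∀ a b, ∑ z, P a z * H z b = if a = b then (1 : ℝ) else 0)
    {ℓ : Z → (Z → Xh) → ℝ} (hℓ : ∀ z s, ℓ z s = ∑ b, H z b * ∑ z', Λ b (s z') * P b z')
    (a : X) (z : Z) (s : Z → Xh) : ℓ z s = Λ a (s z) := by
  have : Subsingleton X := Fintype.card_le_one_iff_subsingleton.mp
    ((card_le_card_of_sum_mul_eq_ite hPH).trans (Fintype.card_le_one_iff_subsingleton.mpr ‹_›))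
  have hPHa := hPH a a
  rw [Fintype.sum_subsingleton _ z, if_pos rfl] at hPHa
  rw [hℓ, Fintype.sum_subsingleton _ a, Fintype.sum_subsingleton _ z]
  linear_combination Λ a (s z) * hPHa

theorem sum_loss_le_of_sum_estimatedLoss_le {X Z Xh : Type*} [Fintype X] [Fintype Z]
    [DecidableEq X] {Λ : X → Xh → ℝ} {P : X → Z → ℝ} {H : Z → X → ℝ}
    (hPH : ∀ a b, ∑ z, P a z * H z b = if a = b then (1 : ℝ) else 0)
    {ℓ : Z → (Z → Xh) → ℝ} (hℓ : ∀ z s, ℓ z s = ∑ b, H z b * ∑ z', Λ b (s z') * P b z')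
    (hdeg : Subsingleton Xh ∨ Subsingleton Z) {n : ℕ} (x : Fin n → X) {z : Fin n → Z}
    {S S' : Fin n → Z → Xh} (h : ∑ t, ℓ (z t) (S t) ≤ ∑ t, ℓ (z t) (S' t)) :
    ∑ t, Λ (x t) (S t (z t)) ≤ ∑ t, Λ (x t) (S' t (z t)) := by
  rcases hdeg with _ | _
  · rw [Subsingleton.elim S S']
  have hℓΛ (t : Fin n) (s : Z → Xh) : ℓ (z t) s = Λ (x t) (s (z t)) :=
    estimatedLoss_eq_loss_of_subsingleton hPH hℓ (x t) (z t) s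
  simpa only [hℓΛ] using h

theorem sub_mem_Icc_of_nonneg {A B : Type*} [Finite A] [Finite B] {u : A → ℝ} {v : B → ℝ}
    (hu : ∀ a, 0 ≤ u a) (a : A) (b : B) :
    u a - v b ∈ Set.Icc (-⨆ b, v b) ((⨆ a, u a) - ⨅ b, v b) := by
  have hua := le_ciSup (Set.finite_range u).bddAbove a
  have hvb := le_ciSup (Set.finite_range v).bddAbove b
  have hvb' := ciInf_le (Set.finite_range v).bddBelow b
  exact ⟨by linarith [hu a], by linarith⟩

theorem measure_abs_loss_sub_estimatedLoss_ge_le {Ω X Z Xh : Type*} [MeasurableSpace Ω]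
    {μ : Measure Ω} [IsProbabilityMeasure μ] [Fintype X] [DecidableEq X] [Fintype Z]
    [MeasurableSpace Z] [MeasurableSingletonClass Z] {n : ℕ} (hn : 0 < n) {Λ : X → Xh → ℝ}
    {P : X → Z → ℝ} {H : Z → X → ℝ}
    (hPH : ∀ a b, ∑ z, P a z * H z b = if a = b then (1 : ℝ) else 0)
    {ℓ : Z → (Z → Xh) → ℝ} (hℓ : ∀ z s, ℓ z s = ∑ b, H z b * ∑ z', Λ b (s z') * P b z')
    {x : Fin n → X} {Zs : Fin n → Ω → Z} (hmeas : ∀ t, Measurable (Zs t))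
    (hindep : iIndepFun Zs μ) (hdist : ∀ t z, (μ {ω | Zs t ω = z}).toReal = P (x t) z)
    {lo hi : ℝ} (hbd : ∀ a z s, Λ a (s z) - ℓ z s ∈ Set.Icc lo hi)
    (S : Fin n → Z → Xh) {ε : ℝ} (hε : 0 ≤ ε) :
    μ {ω | ε / 2 ≤ |1 / (n : ℝ) * ∑ t, Λ (x t) (S t (Zs t ω)) -
        1 / (n : ℝ) * ∑ t, ℓ (Zs t ω) (S t)|} ≤
      ENNReal.ofReal (2 * Real.exp (-n * ε ^ 2 / (2 * (hi - lo) ^ 2))) := by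
  have hnR : (0 : ℝ) < n := Nat.cast_pos.mpr hn
  have h := measure_abs_sum_ge_le_of_mem_Icc
    (hindep.comp (fun t z => Λ (x t) (S t z) - ℓ z (S t)) fun _ => measurable_of_finite _)
    (fun t => ((measurable_of_finite _).comp (hmeas t)).aemeasurable)
    (fun t => ae_of_all _ fun ω => hbd (x t) (Zs t ω) (S t))
    (fun t => integral_loss_sub_estimatedLoss_eq_zero hPH hℓ (hmeas t) (hdist t) (S t))
    (c := n * ε / 2) (by positivity)
  have hexp : -2 * (n * ε / 2) ^ 2 / (Fintype.card (Fin n) * (hi - lo) ^ 2) =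
      -n * ε ^ 2 / (2 * (hi - lo) ^ 2) := by
    rw [Fintype.card_fin, show -2 * ((n : ℝ) * ε / 2) ^ 2 = n * (-n * ε ^ 2 / 2) by ring,
      mul_div_mul_left _ _ hnR.ne', div_div]
  refine (measure_mono fun ω hω => ?_).trans (hexp ▸ h)
  rw [Set.mem_ofPred_eq, ← mul_sub, ← sum_sub_distrib, abs_mul, abs_of_pos (by positivity),
    one_div_mul_eq_div, le_div_iff₀ hnR] at hω
  exact Set.mem_ofPred.mpr (by simp only [Function.comp_apply]; linarith)

theorem binEntropy_eq_real_binEntropy (x : ℝ) : binEntropy x = Real.binEntropy x := by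
  rw [binEntropy, Real.binEntropy, Real.log_inv, Real.log_inv]
  ring

theorem sum_choose_mul_pow_mul_pow_le_one {p : ℝ} (hp : 0 ≤ p) (hpq : p ≤ 1 - p) {m n : ℕ}
    (hmn : m ≤ n) :
    (∑ k ∈ range (m + 1), (n.choose k : ℝ)) * (p ^ m * (1 - p) ^ (n - m)) ≤ 1 := by
  have hq : 0 ≤ 1 - p := hp.trans hpq
  calc (∑ k ∈ range (m + 1), (n.choose k : ℝ)) * (p ^ m * (1 - p) ^ (n - m))
      ≤ ∑ k ∈ range (m + 1), p ^ k * (1 - p) ^ (n - k) * n.choose k := by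
        rw [sum_mul]
        refine sum_le_sum fun k hk => ?_
        have hkm : k ≤ m := Nat.lt_succ_iff.mp (mem_range.mp hk)
        have hterm : p ^ m * (1 - p) ^ (n - m) ≤ p ^ k * (1 - p) ^ (n - k) :=
          calc p ^ m * (1 - p) ^ (n - m) = p ^ k * (p ^ (m - k) * (1 - p) ^ (n - m)) := by
                rw [← mul_assoc, ← pow_add, Nat.add_sub_cancel' hkm]
            _ ≤ p ^ k * ((1 - p) ^ (m - k) * (1 - p) ^ (n - m)) := by gcongr
            _ = p ^ k * (1 - p) ^ (n - k) := by rw [← pow_add]; congr 2; omega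
        rw [mul_comm]
        exact mul_le_mul_of_nonneg_right hterm (Nat.cast_nonneg _)
    _ ≤ ∑ k ∈ range (n + 1), p ^ k * (1 - p) ^ (n - k) * n.choose k :=
        sum_le_sum_of_subset_of_nonneg (range_subset_range.mpr (by omega))
          fun k _ _ => by positivity
    _ = 1 := by rw [← add_pow, add_sub_cancel, one_pow]

theorem sum_choose_le_exp_binEntropy {m n : ℕ} (hmn : 2 * m ≤ n) :
    ∑ k ∈ range (m + 1), (n.choose k : ℝ) ≤ Real.exp (n * binEntropy (m / n)) := by
  rcases Nat.eq_zero_or_pos m with rfl | hm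
  · simp [binEntropy]
  have hn : (0 : ℝ) < n := by exact_mod_cast (show 0 < n by omega)
  set p : ℝ := m / n with hp
  have hp0 : 0 < p := by positivity
  have hpq : p ≤ 1 - p := by
    rw [hp, le_sub_iff_add_le, ← add_div, div_le_one hn]
    exact_mod_cast (show m + m ≤ n by omega)
  have hpow : p ^ m * (1 - p) ^ (n - m) = Real.exp (-(n * binEntropy p)) := by
    have hnp : (n : ℝ) * p = m := by rw [hp]; field_simp
    have hnq : (n : ℝ) * (1 - p) = (n - m : ℕ) := by
      rw [Nat.cast_sub (by omega), mul_sub, hnp, mul_one]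
    rw [show -(n * binEntropy p) = m * Real.log p + (n - m : ℕ) * Real.log (1 - p) by
        rw [binEntropy]; linear_combination Real.log p * hnp + Real.log (1 - p) * hnq,
      Real.exp_add, Real.exp_nat_mul, Real.exp_nat_mul, Real.exp_log hp0,
      Real.exp_log (by linarith)]
  have hle := sum_choose_mul_pow_mul_pow_le_one hp0.le hpq (show m ≤ n by omega)
  rw [hpow] at hle
  calc ∑ k ∈ range (m + 1), (n.choose k : ℝ)
      = (∑ k ∈ range (m + 1), (n.choose k : ℝ)) * Real.exp (-(n * binEntropy p)) *
          Real.exp (n * binEntropy p) := by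
        rw [mul_assoc, ← Real.exp_add, neg_add_cancel, Real.exp_zero, mul_one]
    _ ≤ Real.exp (n * binEntropy p) := by
        have := Real.exp_pos (n * binEntropy p)
        nlinarith

theorem mul_binEntropy_div_add_mul_binEntropy_div {x y : ℝ} (hx : 0 < x) (hy : 0 < y) :
    x * binEntropy (y / x) + y * binEntropy (x / y) = 0 := by
  rcases eq_or_ne x y with rfl | hxy
  · simp [binEntropy, hx.ne']
  have h1 : 1 - y / x = (x - y) / x := by field_simp
  have h2 : 1 - x / y = -((x - y) / y) := by field_simp; ring
  have hxy' : x - y ≠ 0 := sub_ne_zero.mpr hxy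
  rw [binEntropy, binEntropy, h1, h2, Real.log_neg_eq_log, Real.log_div hy.ne' hx.ne',
    Real.log_div hx.ne' hy.ne', Real.log_div hxy' hx.ne', Real.log_div hxy' hy.ne']
  field_simp
  ring

theorem neg_mul_log_two_le_mul_binEntropy_div {x y : ℝ} (hx : 0 < x) (hy : 0 < y) :
    -(y * Real.log 2) ≤ x * binEntropy (y / x) := by
  have := mul_binEntropy_div_add_mul_binEntropy_div hx hy
  rw [binEntropy_eq_real_binEntropy (x / y)] at this
  nlinarith [Real.binEntropy_le_log_two (p := x / y)]

theorem card_filter_card_le_le_sum_choose (n m : ℕ) :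
    #(univ.filter fun A : Finset (Fin n) => #A ≤ m) ≤ ∑ k ∈ range (m + 1), n.choose k := by
  calc #(univ.filter fun A : Finset (Fin n) => #A ≤ m)
      ≤ #((range (m + 1)).biUnion fun k => powersetCard k (univ : Finset (Fin n))) := by
        refine card_le_card fun A hA => mem_biUnion.mpr ⟨#A, ?_, ?_⟩
        · exact mem_range.mpr (Nat.lt_succ_of_le (mem_filter.mp hA).2)
        · exact mem_powersetCard.mpr ⟨subset_univ A, rfl⟩
    _ ≤ ∑ k ∈ range (m + 1), n.choose k := by
        refine card_biUnion_le.trans (sum_le_sum fun k _ => ?_)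
        rw [card_powersetCard, card_univ, Fintype.card_fin]

section Switches

variable {α : Type*} [DecidableEq α] {n : ℕ}

def switches (S : Fin n → α) : Finset (Fin n) :=
  univ.filter (fun t : Fin n =>
    0 < t.val ∧ S t ≠ S ⟨t.val - 1, Nat.lt_of_le_of_lt (Nat.sub_le _ _) t.isLt⟩)

theorem eq_of_switches_subset {S S' : Fin n → α} {A : Finset (Fin n)} (hS : switches S ⊆ A)
    (hS' : switches S' ⊆ A) (h : ∀ t : Fin n, (t.val = 0 ∨ t ∈ A) → S t = S' t) : S = S' := by
  funext ⟨t, ht⟩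
  induction t with
  | zero => exact h _ (Or.inl rfl)
  | succ k ih =>
    by_cases hk : (⟨k + 1, ht⟩ : Fin n) ∈ A
    · exact h _ (Or.inr hk)
    have hstay {T : Fin n → α} (hT : switches T ⊆ A) : T ⟨k + 1, ht⟩ = T ⟨k, by omega⟩ := by
      by_contra hne
      exact hk (hT (mem_filter.mpr ⟨mem_univ _, Nat.succ_pos k, hne⟩))
    rw [hstay hS, hstay hS', ih]

theorem card_filter_switches_subset_le [Fintype α] [Nonempty α] (A : Finset (Fin n)) :
    #(univ.filter fun S : Fin n → α => switches S ⊆ A) ≤ Fintype.card α ^ (#A + 1) := by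
  set B := univ.filter fun t : Fin n => t.val = 0 ∨ t ∈ A
  have hB : #B ≤ #A + 1 := by
    have h0 : #(univ.filter fun t : Fin n => t.val = 0) ≤ 1 :=
      card_le_one.mpr fun s hs t ht => Fin.ext ((mem_filter.mp hs).2.trans (mem_filter.mp ht).2.symm)
    calc #B ≤ #((univ.filter fun t : Fin n => t.val = 0) ∪ A) :=
          card_le_card fun t ht => by simpa [B] using ht
      _ ≤ #A + 1 := by have := card_union_le (univ.filter fun t : Fin n => t.val = 0) A; omega
  calc #(univ.filter fun S : Fin n → α => switches S ⊆ A)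
      ≤ #(univ : Finset (B → α)) := by
        refine card_le_card_of_injOn (fun S t => S t) (fun _ _ => mem_univ _) ?_
        intro S hS S' hS' hSS'
        refine eq_of_switches_subset (mem_filter.mp hS).2 (mem_filter.mp hS').2 fun t ht => ?_
        exact congrFun hSS' ⟨t, mem_filter.mpr ⟨mem_univ _, ht⟩⟩
    _ = Fintype.card α ^ #B := by simp
    _ ≤ Fintype.card α ^ (#A + 1) := Nat.pow_le_pow_right Fintype.card_pos hB

theorem card_filter_card_switches_le_le_sum_choose_mul [Fintype α] [Nonempty α] (m : ℕ) :
    #(univ.filter fun S : Fin n → α => #(switches S) ≤ m) ≤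
      (∑ k ∈ range (m + 1), n.choose k) * Fintype.card α ^ (m + 1) := by
  calc #(univ.filter fun S : Fin n → α => #(switches S) ≤ m)
      ≤ #((univ.filter fun A : Finset (Fin n) => #A ≤ m).biUnion
          fun A => univ.filter fun S : Fin n → α => switches S ⊆ A) := by
        refine card_le_card fun S hS => mem_biUnion.mpr ⟨switches S, ?_, ?_⟩
        · exact mem_filter.mpr ⟨mem_univ _, (mem_filter.mp hS).2⟩
        · exact mem_filter.mpr ⟨mem_univ _, subset_refl _⟩
    _ ≤ ∑ A ∈ univ.filter (fun A : Finset (Fin n) => #A ≤ m), Fintype.card α ^ (m + 1) := by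
        refine card_biUnion_le.trans (sum_le_sum fun A hA => ?_)
        exact (card_filter_switches_subset_le A).trans
          (Nat.pow_le_pow_right Fintype.card_pos (by simpa using (mem_filter.mp hA).2))
    _ ≤ _ := by
        rw [sum_const, smul_eq_mul]
        exact Nat.mul_le_mul_right _ (card_filter_card_le_le_sum_choose n m)

end Switches

theorem card_filter_card_switches_le_le_exp {α : Type*} [Fintype α] [DecidableEq α] {n : ℕ}
    (hn : 0 < n) (hα : 4 ≤ Fintype.card α) (m : ℕ) :
    (#(univ.filter fun S : Fin n → α => #(switches S) ≤ m) : ℝ) ≤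
      Real.exp (2 * (n * binEntropy (m / n) + (m + 1) * Real.log (Fintype.card α))) := by
  have : Nonempty α := Fintype.card_pos_iff.mp (by omega)
  set N := Fintype.card α
  set K := #(univ.filter fun S : Fin n → α => #(switches S) ≤ m)
  have hN : (0 : ℝ) < N := by positivity
  have hpow (k : ℕ) : (N : ℝ) ^ k = Real.exp (k * Real.log N) := by
    rw [Real.exp_nat_mul, Real.exp_log hN]
  have hlogN : 2 * Real.log 2 ≤ Real.log N := by
    rw [← Real.log_rpow two_pos]
    exact Real.log_le_log (by positivity) (by norm_num; exact_mod_cast hα)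
  have hK : (K : ℝ) ≤ Real.exp (n * Real.log N) := by
    rw [← hpow]
    exact_mod_cast (card_le_univ _).trans (by simp [N])
  have hnR : (0 : ℝ) < n := by exact_mod_cast hn
  rcases le_or_gt m n with hmn | hnm
  · have hh : 0 ≤ binEntropy (m / n) := by
      rw [binEntropy_eq_real_binEntropy]
      exact Real.binEntropy_nonneg (by positivity) (by rw [div_le_one hnR]; exact_mod_cast hmn)
    have hlog : 0 ≤ Real.log N := by linarith [Real.log_pos one_lt_two]
    rcases le_or_gt (2 * m) n with h2m | h2m
    · calc (K : ℝ) ≤ (∑ k ∈ range (m + 1), (n.choose k : ℝ)) * (N : ℝ) ^ (m + 1) := by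
            exact_mod_cast card_filter_card_switches_le_le_sum_choose_mul m
        _ ≤ Real.exp (n * binEntropy (m / n)) * Real.exp ((m + 1 : ℕ) * Real.log N) := by
            rw [← hpow]; gcongr; exact sum_choose_le_exp_binEntropy h2m
        _ ≤ _ := by
            rw [← Real.exp_add]; gcongr; push_cast; nlinarith
    · refine hK.trans (Real.exp_le_exp.mpr ?_)
      have : (n : ℝ) ≤ 2 * (m + 1) := by exact_mod_cast (show n ≤ 2 * (m + 1) by omega)
      nlinarith
  -- For `n < m` the argument `m / n` lies outside `[0, 1]` and `binEntropy` is negative there;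
  -- `n h(m/n) = -m h(n/m) ≥ -m log 2` is absorbed by `N ≥ 4`.
  · have hh := neg_mul_log_two_le_mul_binEntropy_div hnR (Nat.cast_pos.mpr (hn.trans hnm))
    refine hK.trans (Real.exp_le_exp.mpr ?_)
    have : (n : ℝ) ≤ m := by exact_mod_cast hnm.le
    nlinarith [Real.log_pos one_lt_two]

theorem four_le_card_fun {α β : Type*} [Fintype α] [Fintype β] [DecidableEq α] [Nontrivial α]
    [Nontrivial β] : 4 ≤ Fintype.card (α → β) := by
  rw [Fintype.card_fun]
  calc 4 = 2 ^ 2 := rfl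
    _ ≤ Fintype.card β ^ 2 := Nat.pow_le_pow_left Fintype.one_lt_card 2
    _ ≤ Fintype.card β ^ Fintype.card α := Nat.pow_le_pow_right Fintype.card_pos Fintype.one_lt_card

theorem exists_half_lt_abs_sub_of_lt_sub_inf' {β : Type*} {C : Finset β} (hC : C.Nonempty)
    {f g : β → ℝ} {s : β} (hs : s ∈ C) (hmin : ∀ S ∈ C, g s ≤ g S) {ε : ℝ}
    (h : ε < f s - C.inf' hC f) : ∃ S ∈ C, ε / 2 < |f S - g S| := by
  obtain ⟨S, hS, hfS⟩ := C.exists_mem_eq_inf' hC f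
  by_contra! hsmall
  have h1 := (le_abs_self _).trans (hsmall s hs)
  have h2 := (neg_le_abs _).trans (hsmall S hS)
  linarith [hmin S hS]

theorem sdude_zero_order_concentration_general {X Z Xh Ω : Type*}
    [Fintype X] [Fintype Z] [Fintype Xh]
    [DecidableEq X] [DecidableEq Z] [DecidableEq Xh]
    [MeasurableSpace Z] [MeasurableSingletonClass Z]
    [MeasurableSpace Ω] (μ : Measure Ω) [IsProbabilityMeasure μ]
    (n m : ℕ) (hn : 0 < n)
    (Λ : X → Xh → ℝ) (hΛ : ∀ a b, 0 ≤ Λ a b)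
    (P : X → Z → ℝ) (H : Z → X → ℝ)
    (hPH : ∀ a b, ∑ z, P a z * H z b = if a = b then (1 : ℝ) else 0)
    (x : Fin n → X)
    (Zs : Fin n → Ω → Z) (hmeas : ∀ t, Measurable (Zs t))
    (hindep : iIndepFun Zs μ)
    (hdist : ∀ t z, (μ {ω | Zs t ω = z}).toReal = P (x t) z)
    (ℓ : Z → (Z → Xh) → ℝ)
    (hℓ : ∀ z s0, ℓ z s0 = ∑ x', H z x' * ∑ z', Λ x' (s0 z') * P x' z')
    (Λmax ℓmax Lmax : ℝ)
    (hΛmax : Λmax = ⨆ p : X × Xh, Λ p.1 p.2)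
    (hℓmax : ℓmax = (⨆ p : Z × (Z → Xh), ℓ p.1 p.2) - ⨅ p : Z × (Z → Xh), ℓ p.1 p.2)
    (hLmax : Lmax = Λmax + ℓmax)
    (C : Finset (Fin n → Z → Xh))
    (hC : C = Finset.univ.filter (fun S => (Finset.univ.filter (fun t : Fin n =>
        0 < t.val ∧
          S t ≠ S ⟨t.val - 1, Nat.lt_of_le_of_lt (Nat.sub_le _ _) t.isLt⟩)).card ≤ m))
    (hCne : C.Nonempty)
    (Shat : Ω → Fin n → Z → Xh)
    (hShat : ∀ ω, Shat ω ∈ C ∧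
      ∀ S ∈ C, ∑ t, ℓ (Zs t ω) (Shat ω t) ≤ ∑ t, ℓ (Zs t ω) (S t))
    (ε : ℝ) (hε : 0 < ε) :
    μ {ω | (1 / (n : ℝ)) * ∑ t, Λ (x t) (Shat ω t (Zs t ω)) -
          C.inf' hCne (fun S => (1 / (n : ℝ)) * ∑ t, Λ (x t) (S t (Zs t ω))) > ε} ≤
      ENNReal.ofReal (2 * Real.exp (-(n : ℝ) * (ε ^ 2 / (2 * Lmax ^ 2) -
        2 * (binEntropy ((m : ℝ) / (n : ℝ)) +
          ((m : ℝ) + 1) * Real.log (Fintype.card (Z → Xh)) / (n : ℝ))))) := by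
  let L : (Fin n → Z → Xh) → Ω → ℝ := fun S ω => 1 / (n : ℝ) * ∑ t, Λ (x t) (S t (Zs t ω))
  let L' : (Fin n → Z → Xh) → Ω → ℝ := fun S ω => 1 / (n : ℝ) * ∑ t, ℓ (Zs t ω) (S t)
  by_cases hdeg : Subsingleton Xh ∨ Subsingleton Z
  · refine (measure_mono_null (fun ω hω => ?_) measure_empty).trans_le zero_le
    have hopt : ∀ S ∈ C, L (Shat ω) ω ≤ L S ω := fun S hS => mul_le_mul_of_nonneg_left
      (sum_loss_le_of_sum_estimatedLoss_le hPH hℓ hdeg x ((hShat ω).2 S hS)) (by positivity)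
    exact (Set.mem_ofPred.mp hω).not_ge (by linarith [le_inf' hCne _ hopt])
  obtain ⟨hXh, hZ⟩ : Nontrivial Xh ∧ Nontrivial Z := by
    simpa only [not_or, not_subsingleton_iff_nontrivial] using hdeg
  have hCcard : (#C : ℝ) ≤ Real.exp (2 * (n * binEntropy (m / n) +
      (m + 1) * Real.log (Fintype.card (Z → Xh)))) := by
    rw [hC]
    exact card_filter_card_switches_le_le_exp hn four_le_card_fun m
  let r := Real.exp (-n * ε ^ 2 / (2 * Lmax ^ 2))
  let D : (Fin n → Z → Xh) → Set Ω := fun S => {ω | ε / 2 ≤ |L S ω - L' S ω|}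
  have hD (S) : μ (D S) ≤ ENNReal.ofReal (2 * r) := by
    have hwidth : (⨆ p : X × Xh, Λ p.1 p.2) - (⨅ p : Z × (Z → Xh), ℓ p.1 p.2) -
        -(⨆ p : Z × (Z → Xh), ℓ p.1 p.2) = Lmax := by rw [hLmax, hΛmax, hℓmax]; ring
    have h := measure_abs_loss_sub_estimatedLoss_ge_le hn hPH hℓ hmeas hindep hdist
      (fun a z s => sub_mem_Icc_of_nonneg (v := fun p : Z × (Z → Xh) => ℓ p.1 p.2)
        (fun p : X × Xh => hΛ p.1 p.2) (a, s z) (z, s)) S hε.le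
    rwa [hwidth] at h
  calc _ ≤ μ (⋃ S ∈ C, D S) := measure_mono fun ω hω => ?_
    _ ≤ ∑ S ∈ C, μ (D S) := measure_biUnion_finset_le C D
    _ ≤ ∑ S ∈ C, ENNReal.ofReal (2 * r) := sum_le_sum fun S _ => hD S
    _ = ENNReal.ofReal (#C * (2 * r)) := by
      rw [sum_const, nsmul_eq_mul, ENNReal.ofReal_mul (Nat.cast_nonneg _), ENNReal.ofReal_natCast]
    _ ≤ _ := ENNReal.ofReal_le_ofReal ?_
  · obtain ⟨S, hS, hlt⟩ := exists_half_lt_abs_sub_of_lt_sub_inf' hCne (f := (L · ω))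
      (g := (L' · ω)) (hShat ω).1
      (fun S hS => mul_le_mul_of_nonneg_left ((hShat ω).2 S hS) (by positivity)) hω
    exact Set.mem_biUnion hS (Set.mem_ofPred.mpr hlt.le)
  · rw [show -(n : ℝ) * (ε ^ 2 / (2 * Lmax ^ 2) - 2 * (binEntropy (m / n) +
        (m + 1) * Real.log (Fintype.card (Z → Xh)) / n)) = -n * ε ^ 2 / (2 * Lmax ^ 2) +
        2 * (n * binEntropy (m / n) + (m + 1) * Real.log (Fintype.card (Z → Xh))) by
      field_simp; ring, Real.exp_add]
    nlinarith [Real.exp_pos (-n * ε ^ 2 / (2 * Lmax ^ 2))]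

/-- Concentration for the (0,m)-S-DUDE.  If `Ŝ` minimizes the estimated
loss over the class `S_{0,m}^n` of tuples of single-symbol denoisers with at most `m`
switches, then
`P(L_{Ŝ}(xⁿ,Zⁿ) − D_{0,m}(xⁿ,Zⁿ) > ε) ≤ 2 exp(−n[ε²/(2L_max²) − 2{h(m/n) + (m+1)ln N/n}])`
where `N = |X̂|^{|Z|}`. -/
theorem sdude_zero_order_concentration {X Z Xh Ω : Type*}
    [Fintype X] [Fintype Z] [Fintype Xh]
    [Nonempty X] [Nonempty Z] [Nonempty Xh] [DecidableEq X] [DecidableEq Z] [DecidableEq Xh]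
    [MeasurableSpace Z] [MeasurableSingletonClass Z]
    [MeasurableSpace Ω] (μ : Measure Ω) [IsProbabilityMeasure μ]
    (n m : ℕ) (hn : 0 < n)
    (Λ : X → Xh → ℝ) (hΛ : ∀ a b, 0 ≤ Λ a b)
    (P : X → Z → ℝ) (H : Z → X → ℝ)
    (hPH : ∀ a b, ∑ z, P a z * H z b = if a = b then (1 : ℝ) else 0)
    (x : Fin n → X)
    (Zs : Fin n → Ω → Z) (hmeas : ∀ t, Measurable (Zs t))
    (hindep : iIndepFun Zs μ)
    (hdist : ∀ t z, (μ {ω | Zs t ω = z}).toReal = P (x t) z)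
    (ℓ : Z → (Z → Xh) → ℝ)
    (hℓ : ∀ z s0, ℓ z s0 = ∑ x', H z x' * ∑ z', Λ x' (s0 z') * P x' z')
    (Λmax ℓmax Lmax : ℝ)
    (hΛmax : Λmax = ⨆ p : X × Xh, Λ p.1 p.2)
    (hℓmax : ℓmax = (⨆ p : Z × (Z → Xh), ℓ p.1 p.2) - ⨅ p : Z × (Z → Xh), ℓ p.1 p.2)
    (hLmax : Lmax = Λmax + ℓmax)
    (C : Finset (Fin n → Z → Xh))
    (hC : C = Finset.univ.filter (fun S => (Finset.univ.filter (fun t : Fin n =>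
        0 < t.val ∧
          S t ≠ S ⟨t.val - 1, Nat.lt_of_le_of_lt (Nat.sub_le _ _) t.isLt⟩)).card ≤ m))
    (hCne : C.Nonempty)
    (Shat : Ω → Fin n → Z → Xh)
    (hShat : ∀ ω, Shat ω ∈ C ∧
      ∀ S ∈ C, ∑ t, ℓ (Zs t ω) (Shat ω t) ≤ ∑ t, ℓ (Zs t ω) (S t))
    (ε : ℝ) (hε : 0 < ε) :
    μ {ω | (1 / (n : ℝ)) * ∑ t, Λ (x t) (Shat ω t (Zs t ω)) -
          C.inf' hCne (fun S => (1 / (n : ℝ)) * ∑ t, Λ (x t) (S t (Zs t ω))) > ε} ≤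
      ENNReal.ofReal (2 * Real.exp (-(n : ℝ) * (ε ^ 2 / (2 * Lmax ^ 2) -
        2 * (binEntropy ((m : ℝ) / (n : ℝ)) +
          ((m : ℝ) + 1) * Real.log (Fintype.card (Z → Xh)) / (n : ℝ))))) :=
  sdude_zero_order_concentration_general μ n m hn Λ hΛ P H hPH x Zs hmeas hindep hdist ℓ hℓ Λmax
    ℓmax Lmax hΛmax hℓmax hLmax C hC hCne Shat hShat ε hε
end
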